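/- Let a > 1 and let X ∈ ℝ^{m×n} (m ≤ n) be a matrix with rank(X) = r and largest singular value σ₁(X). Set β₁ = a·(a·r − a + 1)·σ₁(X)/(a − 1). Then for every β ≥ β₁ with β > 0, one has P_a(β⁻¹·X) ≤ 1 − 1/a. -/

import Mathlib

open Matrix Filter

/-- The singular values of a real `m × n` matrix: square roots of the eigenvalues of `X * Xᵀ`. -/
noncomputable def sv {m n : ℕ} (X : Matrix (Fin m) (Fin n) ℝ) : Fin m → ℝ :=
  fun i => Real.sqrt ((Matrix.isHermitian_mul_conjTranspose_self X).eigenvalues i)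

/-- The singular values arranged in descending order: `svSorted X 0 ≥ svSorted X 1 ≥ ⋯`. -/
noncomputable def svSorted {m n : ℕ} (X : Matrix (Fin m) (Fin n) ℝ) : Fin m → ℝ :=
  fun i => sv X (Tuple.sort (sv X) i.rev)

/-- `P_a(X) = Σᵢ a σᵢ(X)/(a σᵢ(X) + 1)`. -/
noncomputable def Pa {m n : ℕ} (a : ℝ) (X : Matrix (Fin m) (Fin n) ℝ) : ℝ :=
  ∑ i, a * sv X i / (a * sv X i + 1)

/-- Frobenius norm. -/
noncomputable def frobNorm {m n : ℕ} (X : Matrix (Fin m) (Fin n) ℝ) : ℝ :=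
  Real.sqrt (∑ i, ∑ j, (X i j) ^ 2)

/-- Nuclear norm: the sum of the singular values. -/
noncomputable def nuclearNorm {m n : ℕ} (X : Matrix (Fin m) (Fin n) ℝ) : ℝ :=
  ∑ i, sv X i

/-- The rectangular `m × n` "diagonal" matrix with diagonal entries `σ`. -/
def diagRect {m n : ℕ} (σ : Fin m → ℝ) : Matrix (Fin m) (Fin n) ℝ :=
  Matrix.of fun i j => if (j : ℕ) = (i : ℕ) then σ i else 0

/-- The `r`-restricted isometry constant `δ_r(𝒜)`. -/
noncomputable def ripConst {m n d : ℕ}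
    (A : Matrix (Fin m) (Fin n) ℝ →ₗ[ℝ] EuclideanSpace ℝ (Fin d)) (r : ℕ) : ℝ :=
  sInf {δ : ℝ | 0 ≤ δ ∧ ∀ X : Matrix (Fin m) (Fin n) ℝ, X.rank ≤ r →
    (1 - δ) * frobNorm X ^ 2 ≤ ‖A X‖ ^ 2 ∧ ‖A X‖ ^ 2 ≤ (1 + δ) * frobNorm X ^ 2}

/-!
All nonzero singular values of `β⁻¹ X` are at most `σ₁(X)/|β|`, and there are `rank X` of them.
Since `t ↦ a t/(a t + 1)` is increasing and vanishes at `0`, `P_a(β⁻¹ X) ≤ r · a t/(a t + 1)` with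
`t = σ₁(X)/|β|`, and this is `≤ 1 - 1/a` exactly when `a t (a r - a + 1) ≤ a - 1`, which is the
condition `β ≥ β₁`.
-/

lemma div_add_one_le_div_add_one {u v : ℝ} (hu : 0 ≤ u) (huv : u ≤ v) :
    u / (u + 1) ≤ v / (v + 1) := by
  rw [div_le_div_iff₀ (by positivity) (by linarith)]
  linarith

lemma mul_div_add_one_le_one_sub_one_div {a r t : ℝ} (ha : 1 < a) (ht : 0 ≤ t)
    (h : a * (a * r - a + 1) * t ≤ a - 1) :
    r * (a * t / (a * t + 1)) ≤ 1 - 1 / a := by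
  have ha0 : 0 < a := by linarith
  rw [← mul_div_assoc, div_le_iff₀ (by positivity), one_sub_div ha0.ne', div_mul_eq_mul_div,
    le_div_iff₀ ha0]
  nlinarith

lemma mul_abs_inv_le_of_div_le {K c β : ℝ} (hc : 0 < c) (h : K / c ≤ β) : K * |β⁻¹| ≤ c := by
  rcases le_or_gt K 0 with hK | hK
  · exact (mul_nonpos_of_nonpos_of_nonneg hK (abs_nonneg _)).trans hc.le
  · have hβ : 0 < β := (div_pos hK hc).trans_le h
    rw [abs_of_pos (inv_pos.2 hβ), ← div_eq_mul_inv, div_le_iff₀ hβ, mul_comm]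
    exact (div_le_iff₀ hc).1 h

lemma Matrix.rank_smul_le {m n R : Type*} [Fintype m] [Fintype n] [DecidableEq m] [CommRing R]
    [StrongRankCondition R] (c : R) (X : Matrix m n R) : (c • X).rank ≤ X.rank := by
  rw [smul_eq_diagonal_mul]
  exact rank_mul_le_right _ _

section SingularValues

variable {m n : ℕ}

lemma sv_nonneg (X : Matrix (Fin m) (Fin n) ℝ) (i : Fin m) : 0 ≤ sv X i :=
  Real.sqrt_nonneg _

open Pointwise in
lemma exists_sv_smul_eq (c : ℝ) (X : Matrix (Fin m) (Fin n) ℝ) (i : Fin m) :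
    ∃ j, sv (c • X) i = |c| * sv X j := by
  have : Nonempty (Fin m) := ⟨i⟩
  have hX := isHermitian_mul_conjTranspose_self X
  have hspec : spectrum ℝ (c • X * (c • X)ᴴ) = (c ^ 2) • spectrum ℝ (X * Xᴴ) := by
    have hne : (spectrum ℝ (X * Xᴴ)).Nonempty :=
      hX.spectrum_real_eq_range_eigenvalues ▸ Set.range_nonempty _
    rw [← spectrum.smul_eq_smul _ _ hne, conjTranspose_smul, star_trivial, Matrix.smul_mul,
      Matrix.mul_smul, smul_smul, sq]
  obtain ⟨_, ⟨j, rfl⟩, hj⟩ : _ ∈ (c ^ 2) • Set.range hX.eigenvalues := by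
    rw [← hX.spectrum_real_eq_range_eigenvalues, ← hspec]
    exact (isHermitian_mul_conjTranspose_self (c • X)).eigenvalues_mem_spectrum_real i
  refine ⟨j, ?_⟩
  rw [sv, ← hj]
  dsimp only
  rw [smul_eq_mul, Real.sqrt_mul (sq_nonneg c), Real.sqrt_sq_eq_abs]
  rfl

lemma sv_le_svSorted_zero (hm : 0 < m) (X : Matrix (Fin m) (Fin n) ℝ) (j : Fin m) :
    sv X j ≤ svSorted X ⟨0, hm⟩ := by
  have hle : (Tuple.sort (sv X)).symm j ≤ Fin.rev ⟨0, hm⟩ := by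
    rw [Fin.le_def, Fin.val_rev]
    exact Nat.le_sub_of_add_le ((Tuple.sort (sv X)).symm j).isLt
  simpa [svSorted] using Tuple.monotone_sort (sv X) hle

lemma card_sv_ne_zero (X : Matrix (Fin m) (Fin n) ℝ) :
    (Finset.univ.filter fun i => sv X i ≠ 0).card = X.rank := by
  rw [← rank_self_mul_conjTranspose X,
    (isHermitian_mul_conjTranspose_self X).rank_eq_card_non_zero_eigs, Fintype.card_subtype]
  congr 1
  ext i
  simpa [sv] using not_congr (Real.sqrt_eq_zero (eigenvalues_self_mul_conjTranspose_nonneg X i))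

lemma Pa_le_rank_mul {a s : ℝ} (ha : 0 ≤ a) {X : Matrix (Fin m) (Fin n) ℝ}
    (hs : ∀ i, sv X i ≤ s) : Pa a X ≤ X.rank * (a * s / (a * s + 1)) := by
  have hzero : ∀ i ∈ Finset.univ, a * sv X i / (a * sv X i + 1) ≠ 0 → sv X i ≠ 0 := by
    rintro i - hi h0
    simp [h0] at hi
  rw [Pa, ← Finset.sum_filter_of_ne hzero, ← card_sv_ne_zero, ← nsmul_eq_mul]
  refine Finset.sum_le_card_nsmul _ _ _ fun i _ => ?_
  exact div_add_one_le_div_add_one (mul_nonneg ha (sv_nonneg X i))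
    (mul_le_mul_of_nonneg_left (hs i) ha)

end SingularValues

theorem statement7_general (m n : ℕ) (hm : 0 < m) (a : ℝ) (ha : 1 < a)
    (X : Matrix (Fin m) (Fin n) ℝ) (r : ℕ) (hr : X.rank = r)
    (β : ℝ)
    (hβ : β ≥ a * (a * (r : ℝ) - a + 1) * svSorted X ⟨0, hm⟩ / (a - 1)) :
    Pa a (β⁻¹ • X) ≤ 1 - 1 / a := by
  set t := |β⁻¹| * svSorted X ⟨0, hm⟩
  have ht : 0 ≤ t := mul_nonneg (abs_nonneg _) (sv_nonneg X _)
  have hsv : ∀ i, sv (β⁻¹ • X) i ≤ t := fun i => by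
    obtain ⟨j, hj⟩ := exists_sv_smul_eq β⁻¹ X i
    exact hj ▸ mul_le_mul_of_nonneg_left (sv_le_svSorted_zero hm X j) (abs_nonneg _)
  have hβt : a * (a * r - a + 1) * t ≤ a - 1 := by
    have hK := mul_abs_inv_le_of_div_le (sub_pos.2 ha) hβ
    linarith
  calc Pa a (β⁻¹ • X) ≤ (β⁻¹ • X).rank * (a * t / (a * t + 1)) :=
        Pa_le_rank_mul (by linarith) hsv
    _ ≤ r * (a * t / (a * t + 1)) := by
        gcongr
        exact hr ▸ rank_smul_le _ X
    _ ≤ 1 - 1 / a := mul_div_add_one_le_one_sub_one_div ha ht hβt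

theorem statement7 (m n : ℕ) (hm : 0 < m) (hmn : m ≤ n) (a : ℝ) (ha : 1 < a)
    (X : Matrix (Fin m) (Fin n) ℝ) (r : ℕ) (hr : X.rank = r)
    (β : ℝ) (hβpos : 0 < β)
    (hβ : β ≥ a * (a * (r : ℝ) - a + 1) * svSorted X ⟨0, hm⟩ / (a - 1)) :
    Pa a (β⁻¹ • X) ≤ 1 - 1 / a :=
  statement7_general m n hm a ha X r hr β hβ
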